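/- Interchange relation (∗) of the main theorem: let R: ℂ^N → End(ℂ^N⊗ℂ^N) satisfy the zero-weight condition, the translation condition, and the dynamical Yang–Baxter equation (hypotheses (i)–(iii)). Fix n, m ≥ 1 and work on (ℂ^N)^{⊗(n+m)}; define Q_i(x) := Π_{j=m}^{1} R_{i,n+j}(x − 2γh^{(i+1,n)} − 2γh^{(n+j+1,n+m)}) for 1 ≤ i ≤ n, and ℐ^{(n+1,n+m)}(x) := R̂_{n+1,n+2}(x−2γh^{(n+3,n+m)}) ⋯ R̂_{n+m−1,n+m}(x). Then for every x ∈ ℂ^N: Q_1(x) Q_2(x) ⋯ Q_n(x) · ℐ^{(n+1,n+m)}(x) = ℐ^{(n+1,n+m)}(x−2γh^{(1,n)}) · Q_1(x) Q_2(x) ⋯ Q_n(x). -/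

import Mathlib

/- STATEMENT 16: Interchange relation (∗) of the main theorem:
   if R satisfies the zero-weight condition, the translation condition and the
   dynamical Yang–Baxter equation, then Q_1(x)⋯Q_n(x)·𝓘^{(n+1,n+m)}(x)
   = 𝓘^{(n+1,n+m)}(x−2γh^{(1,n)})·Q_1(x)⋯Q_n(x), on (ℂ^N)^{⊗(n+m)}. -/

noncomputable section
open Matrix Complex
open scoped BigOperators

variable (N : ℕ) (γ : ℂ)

/-- S placed in factors 1,2 of (ℂ^N)^{⊗3}, argument shifted by s·h^{(3)} -/
def sh12 (S : (Fin N → ℂ) → Matrix (Fin N × Fin N) (Fin N × Fin N) ℂ)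
    (x : Fin N → ℂ) (s : ℂ) :
    Matrix (Fin N × Fin N × Fin N) (Fin N × Fin N × Fin N) ℂ :=
  fun p q => if p.2.2 = q.2.2 then
    S (x + s • (Pi.single q.2.2 1 : Fin N → ℂ)) (p.1, p.2.1) (q.1, q.2.1) else 0

def sh13 (S : (Fin N → ℂ) → Matrix (Fin N × Fin N) (Fin N × Fin N) ℂ)
    (x : Fin N → ℂ) (s : ℂ) :
    Matrix (Fin N × Fin N × Fin N) (Fin N × Fin N × Fin N) ℂ :=
  fun p q => if p.2.1 = q.2.1 then
    S (x + s • (Pi.single q.2.1 1 : Fin N → ℂ)) (p.1, p.2.2) (q.1, q.2.2) else 0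

def sh23 (S : (Fin N → ℂ) → Matrix (Fin N × Fin N) (Fin N × Fin N) ℂ)
    (x : Fin N → ℂ) (s : ℂ) :
    Matrix (Fin N × Fin N × Fin N) (Fin N × Fin N × Fin N) ℂ :=
  fun p q => if p.1 = q.1 then
    S (x + s • (Pi.single q.1 1 : Fin N → ℂ)) (p.2.1, p.2.2) (q.2.1, q.2.2) else 0

/-- the dynamical Yang–Baxter equation for R (no spectral parameter) -/
def DYBE (R : (Fin N → ℂ) → Matrix (Fin N × Fin N) (Fin N × Fin N) ℂ) : Prop :=
  ∀ x : Fin N → ℂ,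
    sh12 N R x γ * sh13 N R x (-γ) * sh23 N R x γ =
    sh23 N R x (-γ) * sh13 N R x γ * sh12 N R x (-γ)

/-- zero-weight condition on R -/
def ZeroWeight (R : (Fin N → ℂ) → Matrix (Fin N × Fin N) (Fin N × Fin N) ℂ) : Prop :=
  ∀ x : Fin N → ℂ, ∀ i j k l : Fin N,
    (Pi.single i 1 : Fin N → ℂ) + Pi.single j 1 ≠
      (Pi.single k 1 : Fin N → ℂ) + Pi.single l 1 →
    R x (i, j) (k, l) = 0

/-- translation condition on R -/
def TransInv (R : (Fin N → ℂ) → Matrix (Fin N × Fin N) (Fin N × Fin N) ℂ) : Prop :=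
  ∀ x : Fin N → ℂ, ∀ t : ℂ, ∀ i j k l : Fin N,
    R (x + t • ((Pi.single i 1 : Fin N → ℂ) + Pi.single j 1)) (i, j) (k, l) =
      R x (i, j) (k, l)

/-- δ_{σ(s)} + … + δ_{σ(t−1)} : sum of basis vectors carried by the factors with
    0-based positions in [s,t); this realizes the dynamical shift h^{(s+1,t)}
    (1-based labels) -/
def hsum (p : ℕ) (s t : ℕ) (σ : Fin p → Fin N) : Fin N → ℂ :=
  ∑ i : Fin p, if s ≤ (i : ℕ) ∧ (i : ℕ) < t then (Pi.single (σ i) 1 : Fin N → ℂ) else 0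

/-- R placed in (0-based) factors a, b of (ℂ^N)^{⊗p}, with σ-dependent
    evaluation point `f σ` (the dynamical shift) -/
def RPair (R : (Fin N → ℂ) → Matrix (Fin N × Fin N) (Fin N × Fin N) ℂ)
    (p : ℕ) (a b : ℕ) (f : (Fin p → Fin N) → Fin N → ℂ) :
    Matrix (Fin p → Fin N) (Fin p → Fin N) ℂ :=
  if h : a < p ∧ b < p then
    Matrix.of fun σ σ' =>
      if ∀ i : Fin p, (i : ℕ) ≠ a → (i : ℕ) ≠ b → σ i = σ' i then
        R (f σ) (σ ⟨a, h.1⟩, σ ⟨b, h.2⟩) (σ' ⟨a, h.1⟩, σ' ⟨b, h.2⟩)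
      else 0
  else 1

/-- R̂ = P·R placed in (0-based) factors a, b -/
def RhatPair (R : (Fin N → ℂ) → Matrix (Fin N × Fin N) (Fin N × Fin N) ℂ)
    (p : ℕ) (a b : ℕ) (f : (Fin p → Fin N) → Fin N → ℂ) :
    Matrix (Fin p → Fin N) (Fin p → Fin N) ℂ :=
  if h : a < p ∧ b < p then
    Matrix.of fun σ σ' =>
      if ∀ i : Fin p, (i : ℕ) ≠ a → (i : ℕ) ≠ b → σ i = σ' i then
        R (f σ) (σ ⟨b, h.2⟩, σ ⟨a, h.1⟩) (σ' ⟨a, h.1⟩, σ' ⟨b, h.2⟩)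
      else 0
  else 1

/-- 𝓘^{(k,l)} (1-based labels k..l):
    R̂_{k,k+1}(·−2γh^{(k+2,l)}) R̂_{k+1,k+2}(·−2γh^{(k+3,l)}) ⋯ R̂_{l−1,l}(·),
    where `base σ` is the evaluation point (allowing σ-dependent shifts) -/
def calI (R : (Fin N → ℂ) → Matrix (Fin N × Fin N) (Fin N × Fin N) ℂ)
    (p : ℕ) (k l : ℕ) (base : (Fin p → Fin N) → Fin N → ℂ) :
    Matrix (Fin p → Fin N) (Fin p → Fin N) ℂ :=
  ((List.range' k (l - k)).map (fun j =>
    RhatPair N R p (j - 1) j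
      (fun σ => base σ - (2 * γ) • hsum N p (j + 1) l σ))).prod

/-- Q_i(x) = Π_{j=m}^{1} R_{i,n+j}(x − 2γh^{(i+1,n)} − 2γh^{(n+j+1,n+m)}),
    1-based label i, on (ℂ^N)^{⊗(n+m)} -/
def Qmat (R : (Fin N → ℂ) → Matrix (Fin N × Fin N) (Fin N × Fin N) ℂ)
    (n m : ℕ) (i : ℕ) (x : Fin N → ℂ) :
    Matrix (Fin (n + m) → Fin N) (Fin (n + m) → Fin N) ℂ :=
  (((List.range' 1 m).reverse).map (fun j =>
    RPair N R (n + m) (i - 1) (n + j - 1)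
      (fun σ => x - (2 * γ) • hsum N (n + m) i n σ
                  - (2 * γ) • hsum N (n + m) (n + j) (n + m) σ))).prod

/- Write `Q = Q₁ ⋯ Qₙ`. It suffices to move `Q` past each factor `R̂_{c,c+1}` of `𝓘` separately,
and past such a factor one `Qᵢ` at a time, for `i = n` down to `1`; passing `Qᵢ` turns the base
point `x − 2γh^{(i+1,n)}` of the factor into `x − 2γh^{(i,n)}`. Every factor `R_{i,n+j}` of `Qᵢ`
acting on sites disjoint from `{c, c+1}` commutes with `R̂_{c,c+1}`: by the zero-weight condition
each of the two preserves the total weight of its pair of sites, and the dynamical shifts of the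
other one only see that total weight. The two remaining factors satisfy
`R_{i,c+1}(y) R_{i,c}(y − 2γh^{(c+1)}) R̂_{c,c+1}(y)
  = R̂_{c,c+1}(y − 2γh^{(i)}) R_{i,c+1}(y) R_{i,c}(y − 2γh^{(c+1)})`,
which is the DYBE in disguise: evaluating the DYBE at `x − γ·(total weight of the column index)`,
which translation invariance and zero weight allow factor by factor, replaces the shifts `±γ` by
`0` and `−2γ`, and conjugating by the flip of the last two sites turns `R₂₃` into `R̂₂₃`. -/

local notation "δ[" i "]" => (Pi.single i (1 : ℂ) : _ → ℂ)

section Twist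

variable {ι V K : Type*}

def twist [Add V] (s : ι → V) (A : V → Matrix ι ι K) (x : V) : Matrix ι ι K :=
  Matrix.of fun p q => A (x + s q) p q

lemma twist_mul [Fintype ι] [Add V] [NonUnitalNonAssocSemiring K] (s : ι → V)
    (A B : V → Matrix ι ι K) (hB : ∀ x p q, B x p q ≠ 0 → s p = s q) (x : V) :
    twist s (fun y => A y * B y) x = twist s A x * twist s B x := by
  ext p q
  simp only [twist, Matrix.of_apply, Matrix.mul_apply]
  refine Finset.sum_congr rfl fun r _ => ?_
  by_cases h : B (x + s q) r q = 0
  · rw [h, mul_zero, mul_zero]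
  · rw [hB _ _ _ h]

end Twist

def swap23 {α : Type*} : α × α × α ≃ α × α × α :=
  Equiv.prodCongr (Equiv.refl α) (Equiv.prodComm α α)

@[simp]
lemma swap23_apply {α : Type*} (x y z : α) : swap23 (x, y, z) = (x, z, y) := rfl

section ThreeSites

variable {N γ}
variable {R : (Fin N → ℂ) → Matrix (Fin N × Fin N) (Fin N × Fin N) ℂ}

lemma TransInv.apply_add_smul_col (hzw : ZeroWeight N R) (htr : TransInv N R)
    (x : Fin N → ℂ) (t : ℂ) (i j k l : Fin N) :
    R (x + t • (δ[k] + δ[l])) (i, j) (k, l) = R x (i, j) (k, l) := by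
  by_cases h : δ[i] + δ[j] = δ[k] + δ[l]
  · rw [← h]
    exact htr x t i j k l
  · rw [hzw _ i j k l h, hzw _ i j k l h]

lemma ZeroWeight.weight_eq (hzw : ZeroWeight N R) {x : Fin N → ℂ} {i j k l : Fin N}
    (h : R x (i, j) (k, l) ≠ 0) : δ[i] + δ[j] = δ[k] + δ[l] :=
  not_not.1 fun h' => h (hzw x i j k l h')

def weight3 (q : Fin N × Fin N × Fin N) : Fin N → ℂ := δ[q.1] + δ[q.2.1] + δ[q.2.2]

lemma sh12_weight3_eq (hzw : ZeroWeight N R) {x : Fin N → ℂ} {s : ℂ}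
    {p q : Fin N × Fin N × Fin N} (h : sh12 N R x s p q ≠ 0) : weight3 p = weight3 q := by
  obtain ⟨h3, h⟩ := ite_ne_right_iff.1 h
  rw [weight3, weight3, ZeroWeight.weight_eq hzw h, h3]

lemma sh13_weight3_eq (hzw : ZeroWeight N R) {x : Fin N → ℂ} {s : ℂ}
    {p q : Fin N × Fin N × Fin N} (h : sh13 N R x s p q ≠ 0) : weight3 p = weight3 q := by
  obtain ⟨h2, h⟩ := ite_ne_right_iff.1 h
  rw [weight3, weight3, h2]
  linear_combination ZeroWeight.weight_eq hzw h

lemma sh23_weight3_eq (hzw : ZeroWeight N R) {x : Fin N → ℂ} {s : ℂ}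
    {p q : Fin N × Fin N × Fin N} (h : sh23 N R x s p q ≠ 0) : weight3 p = weight3 q := by
  obtain ⟨h1, h⟩ := ite_ne_right_iff.1 h
  rw [weight3, weight3, h1]
  linear_combination ZeroWeight.weight_eq hzw h

lemma twist_sh12 (hzw : ZeroWeight N R) (htr : TransInv N R) (s t : ℂ) (x : Fin N → ℂ) :
    twist (fun q => t • weight3 q) (fun y => sh12 N R y s) x = sh12 N R x (s + t) := by
  ext ⟨p₁, p₂, p₃⟩ ⟨q₁, q₂, q₃⟩
  simp only [twist, Matrix.of_apply, sh12, weight3]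
  rw [show x + t • (δ[q₁] + δ[q₂] + δ[q₃]) + s • δ[q₃] =
      x + (s + t) • δ[q₃] + t • (δ[q₁] + δ[q₂]) by module, TransInv.apply_add_smul_col hzw htr]

lemma twist_sh13 (hzw : ZeroWeight N R) (htr : TransInv N R) (s t : ℂ) (x : Fin N → ℂ) :
    twist (fun q => t • weight3 q) (fun y => sh13 N R y s) x = sh13 N R x (s + t) := by
  ext ⟨p₁, p₂, p₃⟩ ⟨q₁, q₂, q₃⟩
  simp only [twist, Matrix.of_apply, sh13, weight3]
  rw [show x + t • (δ[q₁] + δ[q₂] + δ[q₃]) + s • δ[q₂] =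
      x + (s + t) • δ[q₂] + t • (δ[q₁] + δ[q₃]) by module, TransInv.apply_add_smul_col hzw htr]

lemma twist_sh23 (hzw : ZeroWeight N R) (htr : TransInv N R) (s t : ℂ) (x : Fin N → ℂ) :
    twist (fun q => t • weight3 q) (fun y => sh23 N R y s) x = sh23 N R x (s + t) := by
  ext ⟨p₁, p₂, p₃⟩ ⟨q₁, q₂, q₃⟩
  simp only [twist, Matrix.of_apply, sh23, weight3]
  rw [show x + t • (δ[q₁] + δ[q₂] + δ[q₃]) + s • δ[q₁] =
      x + (s + t) • δ[q₁] + t • (δ[q₂] + δ[q₃]) by module, TransInv.apply_add_smul_col hzw htr]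

lemma DYBE.untwisted (hzw : ZeroWeight N R) (htr : TransInv N R) (hybe : DYBE N γ R)
    (x : Fin N → ℂ) :
    sh12 N R x 0 * sh13 N R x (-(2 * γ)) * sh23 N R x 0 =
      sh23 N R x (-(2 * γ)) * sh13 N R x 0 * sh12 N R x (-(2 * γ)) := by
  set s : Fin N × Fin N × Fin N → Fin N → ℂ := fun q => (-γ) • weight3 q
  have hs : ∀ {p q}, weight3 p = weight3 q → s p = s q := fun h => by simp only [s, h]
  have h : twist s (fun y => sh12 N R y γ * sh13 N R y (-γ) * sh23 N R y γ) x =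
      twist s (fun y => sh23 N R y (-γ) * sh13 N R y γ * sh12 N R y (-γ)) x :=
    congrArg (twist s · x) (funext hybe)
  rw [twist_mul s _ _ (fun _ _ _ h => hs (sh23_weight3_eq hzw h)),
    twist_mul s _ _ (fun _ _ _ h => hs (sh13_weight3_eq hzw h)),
    twist_mul s _ _ (fun _ _ _ h => hs (sh12_weight3_eq hzw h)),
    twist_mul s _ _ (fun _ _ _ h => hs (sh13_weight3_eq hzw h)),
    twist_sh12 hzw htr, twist_sh13 hzw htr, twist_sh23 hzw htr, twist_sh12 hzw htr,
    twist_sh13 hzw htr, twist_sh23 hzw htr] at h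
  rwa [show γ + -γ = 0 by ring, show -γ + -γ = -(2 * γ) by ring] at h

lemma sh12_submatrix_swap23 (x : Fin N → ℂ) (s : ℂ) :
    (sh12 N R x s).submatrix swap23 swap23 = sh13 N R x s := by
  ext ⟨p₁, p₂, p₃⟩ ⟨q₁, q₂, q₃⟩
  rfl

lemma sh13_submatrix_swap23 (x : Fin N → ℂ) (s : ℂ) :
    (sh13 N R x s).submatrix swap23 swap23 = sh12 N R x s := by
  ext ⟨p₁, p₂, p₃⟩ ⟨q₁, q₂, q₃⟩
  rfl

lemma DYBE.braid (hzw : ZeroWeight N R) (htr : TransInv N R) (hybe : DYBE N γ R)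
    (x : Fin N → ℂ) :
    sh13 N R x 0 * sh12 N R x (-(2 * γ)) * (sh23 N R x 0).submatrix swap23 id =
      (sh23 N R x (-(2 * γ))).submatrix swap23 id * sh13 N R x 0 * sh12 N R x (-(2 * γ)) :=
  calc _ = (sh12 N R x 0 * sh13 N R x (-(2 * γ)) * sh23 N R x 0).submatrix swap23 id := by
        rw [Matrix.submatrix_mul _ _ _ swap23 _ swap23.bijective,
          Matrix.submatrix_mul _ _ _ swap23 _ swap23.bijective,
          sh12_submatrix_swap23, sh13_submatrix_swap23]
    _ = (sh23 N R x (-(2 * γ)) * sh13 N R x 0 * sh12 N R x (-(2 * γ))).submatrix swap23 id := by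
        rw [DYBE.untwisted hzw htr hybe x]
    _ = _ := by
        rw [mul_assoc, Matrix.submatrix_mul _ _ _ id _ Function.bijective_id,
          Matrix.submatrix_id_id, mul_assoc]

end ThreeSites

section Configurations

variable {ι κ K : Type*} [DecidableEq ι]

def AgreeOff (S : Finset ι) (σ τ : ι → κ) : Prop := ∀ i ∉ S, σ i = τ i

instance [Fintype ι] [DecidableEq κ] (S : Finset ι) (σ τ : ι → κ) :
    Decidable (AgreeOff S σ τ) :=
  inferInstanceAs (Decidable (∀ i ∉ S, σ i = τ i))

lemma agreeOff_iff_insert {S : Finset ι} {k : ι} (hk : k ∉ S) {σ τ : ι → κ} :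
    AgreeOff S σ τ ↔ AgreeOff (insert k S) σ τ ∧ σ k = τ k := by
  refine ⟨fun h => ⟨fun i hi => h i fun hS => hi (Finset.mem_insert_of_mem hS), h k hk⟩,
    fun ⟨h, hk⟩ i hi => ?_⟩
  by_cases hik : i = k
  · rwa [hik]
  · exact h i (by simp [hik, hi])

lemma agreeOff_piecewise (S : Finset ι) (σ τ : ι → κ) : AgreeOff S σ (S.piecewise τ σ) :=
  fun _ hi => (Finset.piecewise_eq_of_notMem _ _ _ hi).symm

lemma agreeOff_piecewise_iff (S T : Finset ι) (σ τ : ι → κ) :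
    AgreeOff T (S.piecewise τ σ) τ ↔ AgreeOff (S ∪ T) σ τ := by
  refine ⟨fun h i hi => ?_, fun h i hi => ?_⟩
  · rw [Finset.mem_union, not_or] at hi
    rw [← h i hi.2, Finset.piecewise_eq_of_notMem _ _ _ hi.1]
  · by_cases hiS : i ∈ S
    · exact Finset.piecewise_eq_of_mem _ _ _ hiS
    · rw [Finset.piecewise_eq_of_notMem _ _ _ hiS]
      exact h i (by simp [hiS, hi])

lemma mul_apply_eq_of_disjoint [Fintype ι] [Fintype κ] [NonUnitalNonAssocSemiring K]
    {S T : Finset ι} (hST : Disjoint S T) {M M' : Matrix (ι → κ) (ι → κ) K}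
    (hM : ∀ σ τ, M σ τ ≠ 0 → AgreeOff S σ τ) (hM' : ∀ σ τ, M' σ τ ≠ 0 → AgreeOff T σ τ)
    (σ τ : ι → κ) : (M * M') σ τ = M σ (S.piecewise τ σ) * M' (S.piecewise τ σ) τ := by
  refine Finset.sum_eq_single _ (fun ρ _ hρ => ?_) (by simp)
  by_contra h
  refine hρ (funext fun i => ?_)
  by_cases hi : i ∈ S
  · rw [Finset.piecewise_eq_of_mem _ _ _ hi]
    exact hM' ρ τ (right_ne_zero_of_mul h) i (Finset.disjoint_left.1 hST hi)
  · rw [Finset.piecewise_eq_of_notMem _ _ _ hi]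
    exact (hM σ ρ (left_ne_zero_of_mul h) i hi).symm

def splitThree (a b c : ι) (hab : a ≠ b) (hac : a ≠ c) (hbc : b ≠ c) :
    (ι → κ) ≃ (κ × κ × κ) × ({i // i ∉ ({a, b, c} : Finset ι)} → κ) where
  toFun σ := ((σ a, σ b, σ c), fun i => σ i)
  invFun v i :=
    if ha : i = a then v.1.1 else if hb : i = b then v.1.2.1 else if hc : i = c then v.1.2.2
    else v.2 ⟨i, by simp [ha, hb, hc]⟩
  left_inv σ := by
    funext i
    dsimp only
    split_ifs <;> simp_all
  right_inv v := by
    obtain ⟨⟨x, y, z⟩, w⟩ := v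
    ext i
    · simp
    · simp [hab.symm]
    · simp [hac.symm, hbc.symm]
    · obtain ⟨i, hi⟩ := i
      simp only [Finset.mem_insert, Finset.mem_singleton, not_or] at hi
      simp [hi.1, hi.2.1, hi.2.2]

variable {a b c : ι} {hab : a ≠ b} {hac : a ≠ c} {hbc : b ≠ c}

@[simp]
lemma splitThree_fst (σ : ι → κ) : (splitThree a b c hab hac hbc σ).1 = (σ a, σ b, σ c) := rfl

lemma splitThree_snd_eq_iff {σ τ : ι → κ} :
    (splitThree a b c hab hac hbc σ).2 = (splitThree a b c hab hac hbc τ).2 ↔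
      AgreeOff {a, b, c} σ τ := by
  simp [splitThree, funext_iff, AgreeOff]

end Configurations

section LocalOperators

variable {X α β K : Type*} [Fintype X] [Fintype α] [Fintype β] [DecidableEq β]

def embedLocal [Zero K] (e : X ≃ α × β) (W : X → Matrix α α K) : Matrix X X K :=
  Matrix.of fun σ τ => if (e σ).2 = (e τ).2 then W σ (e σ).1 (e τ).1 else 0

lemma embedLocal_mul [NonUnitalNonAssocSemiring K] (e : X ≃ α × β) (W W' : X → Matrix α α K)
    (hW' : ∀ σ τ, (e σ).2 = (e τ).2 → W' τ = W' σ) :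
    embedLocal e W * embedLocal e W' = embedLocal e fun σ => W σ * W' σ := by
  ext σ τ
  rw [Matrix.mul_apply, ← e.symm.sum_comp, Fintype.sum_prod_type, Finset.sum_comm]
  simp only [embedLocal, Matrix.of_apply, Equiv.apply_symm_apply, ite_mul, zero_mul, mul_ite,
    mul_zero, Finset.sum_ite_irrel, Finset.sum_const_zero, Finset.sum_ite_eq', Finset.mem_univ,
    if_true, Matrix.mul_apply]
  split_ifs with h
  · refine Finset.sum_congr rfl fun v _ => ?_
    rw [hW' σ _ (by simp [h])]
  · rfl

end LocalOperators

section PairOperators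

variable {N γ}
variable {R : (Fin N → ℂ) → Matrix (Fin N × Fin N) (Fin N × Fin N) ℂ} {p : ℕ}

lemma RPair_apply (a b : Fin p) (f : (Fin p → Fin N) → Fin N → ℂ) (σ τ : Fin p → Fin N) :
    RPair N R p a b f σ τ =
      if AgreeOff {a, b} σ τ then R (f σ) (σ a, σ b) (τ a, τ b) else 0 := by
  simp [RPair, AgreeOff, Fin.val_ne_iff, and_imp]

lemma RhatPair_apply (a b : Fin p) (f : (Fin p → Fin N) → Fin N → ℂ) (σ τ : Fin p → Fin N) :
    RhatPair N R p a b f σ τ =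
      if AgreeOff {a, b} σ τ then R (f σ) (σ b, σ a) (τ a, τ b) else 0 := by
  simp [RhatPair, AgreeOff, Fin.val_ne_iff, and_imp]

lemma agreeOff_of_RPair_ne_zero {a b : Fin p} {f : (Fin p → Fin N) → Fin N → ℂ}
    {σ τ : Fin p → Fin N} (h : RPair N R p a b f σ τ ≠ 0) : AgreeOff {a, b} σ τ := by
  rw [RPair_apply] at h
  exact (ite_ne_right_iff.1 h).1

lemma agreeOff_of_RhatPair_ne_zero {a b : Fin p} {f : (Fin p → Fin N) → Fin N → ℂ}
    {σ τ : Fin p → Fin N} (h : RhatPair N R p a b f σ τ ≠ 0) : AgreeOff {a, b} σ τ := by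
  rw [RhatPair_apply] at h
  exact (ite_ne_right_iff.1 h).1

section BraidRelation

variable {a k l : Fin p} (hak : a ≠ k) (hal : a ≠ l) (hkl : k ≠ l)
include hak hal hkl

lemma RPair_eq_embedLocal_sh13 (g : (Fin p → Fin N) → Fin N → ℂ) (s : ℂ) :
    RPair N R p a l (fun σ => g σ + s • δ[σ k]) =
      embedLocal (splitThree a k l hak hal hkl) fun σ => sh13 N R (g σ) s := by
  ext σ τ
  simp only [RPair_apply, agreeOff_iff_insert (S := {a, l}) (k := k) (by simp [hak.symm, hkl]),
    Finset.insert_comm k a {l}, ite_and, embedLocal, Matrix.of_apply, splitThree_fst,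
    splitThree_snd_eq_iff, sh13]
  by_cases hk : σ k = τ k <;> simp [hk]

lemma RPair_eq_embedLocal_sh12 (g : (Fin p → Fin N) → Fin N → ℂ) (s : ℂ) :
    RPair N R p a k (fun σ => g σ + s • δ[σ l]) =
      embedLocal (splitThree a k l hak hal hkl) fun σ => sh12 N R (g σ) s := by
  ext σ τ
  simp only [RPair_apply,
    agreeOff_iff_insert (S := {a, k}) (k := l) (by simp [hal.symm, hkl.symm]),
    Finset.insert_comm l a {k}, Finset.pair_comm l k, ite_and, embedLocal, Matrix.of_apply,
    splitThree_fst, splitThree_snd_eq_iff, sh12]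
  by_cases hl : σ l = τ l <;> simp [hl]

lemma RhatPair_eq_embedLocal_sh23 (g : (Fin p → Fin N) → Fin N → ℂ) (s : ℂ) :
    RhatPair N R p k l (fun σ => g σ + s • δ[σ a]) =
      embedLocal (splitThree a k l hak hal hkl) fun σ =>
        (sh23 N R (g σ) s).submatrix swap23 id := by
  ext σ τ
  simp only [RhatPair_apply, agreeOff_iff_insert (S := {k, l}) (k := a) (by simp [hak, hal]),
    ite_and, embedLocal, Matrix.of_apply, splitThree_fst, splitThree_snd_eq_iff,
    Matrix.submatrix_apply, swap23_apply, id, sh23]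
  by_cases ha : σ a = τ a <;> simp [ha]

lemma semiconjBy_RPair_RhatPair (hzw : ZeroWeight N R) (htr : TransInv N R)
    (hybe : DYBE N γ R) (g : (Fin p → Fin N) → Fin N → ℂ)
    (hg : ∀ σ τ, AgreeOff {a, k, l} σ τ → g τ = g σ) :
    SemiconjBy (RPair N R p a l g * RPair N R p a k (fun σ => g σ - (2 * γ) • δ[σ l]))
      (RhatPair N R p k l g) (RhatPair N R p k l fun σ => g σ - (2 * γ) • δ[σ a]) := by
  set e := splitThree (κ := Fin N) a k l hak hal hkl
  have h₁ : RPair N R p a l g = embedLocal e fun σ => sh13 N R (g σ) 0 := by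
    simpa using RPair_eq_embedLocal_sh13 hak hal hkl g 0
  have h₂ : RPair N R p a k (fun σ => g σ - (2 * γ) • δ[σ l]) =
      embedLocal e fun σ => sh12 N R (g σ) (-(2 * γ)) := by
    simpa [sub_eq_add_neg] using RPair_eq_embedLocal_sh12 hak hal hkl g (-(2 * γ))
  have h₃ : RhatPair N R p k l g =
      embedLocal e fun σ => (sh23 N R (g σ) 0).submatrix swap23 id := by
    simpa using RhatPair_eq_embedLocal_sh23 hak hal hkl g 0
  have h₄ : RhatPair N R p k l (fun σ => g σ - (2 * γ) • δ[σ a]) =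
      embedLocal e fun σ => (sh23 N R (g σ) (-(2 * γ))).submatrix swap23 id := by
    simpa [sub_eq_add_neg] using RhatPair_eq_embedLocal_sh23 hak hal hkl g (-(2 * γ))
  rw [SemiconjBy, h₁, h₂, h₃, h₄, embedLocal_mul e _ _ ?_, embedLocal_mul e _ _ ?_,
    embedLocal_mul e _ _ ?_]
  · refine congrArg (embedLocal e) (funext fun σ => ?_)
    rw [← mul_assoc]
    exact DYBE.braid hzw htr hybe (g σ)
  all_goals intro σ τ h; simp only [hg σ τ (splitThree_snd_eq_iff.1 h)]

end BraidRelation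

def PairInvariant {M : Type*} (c d : Fin p) (f : (Fin p → Fin N) → M) : Prop :=
  ∀ σ τ, AgreeOff {c, d} σ τ → δ[σ c] + δ[σ d] = δ[τ c] + δ[τ d] → f τ = f σ

section PairInvariant

variable {M : Type*} {c d : Fin p}

lemma PairInvariant.const (x : M) : PairInvariant (N := N) c d fun _ => x :=
  fun _ _ _ _ => rfl

lemma PairInvariant.sub [Sub M] {f g : (Fin p → Fin N) → M} (hf : PairInvariant c d f)
    (hg : PairInvariant c d g) : PairInvariant c d fun σ => f σ - g σ :=
  fun σ τ hστ hw => by simp only [hf σ τ hστ hw, hg σ τ hστ hw]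

lemma PairInvariant.const_smul {S : Type*} [SMul S M] {f : (Fin p → Fin N) → M}
    (hf : PairInvariant c d f) (z : S) : PairInvariant c d fun σ => z • f σ :=
  fun σ τ hστ hw => by simp only [hf σ τ hστ hw]

end PairInvariant

lemma commute_RPair_RhatPair (hzw : ZeroWeight N R) {a b c d : Fin p}
    (hac : a ≠ c) (had : a ≠ d) (hbc : b ≠ c) (hbd : b ≠ d) {f g : (Fin p → Fin N) → Fin N → ℂ}
    (hf : PairInvariant c d f) (hg : PairInvariant a b g) :
    Commute (RPair N R p a b f) (RhatPair N R p c d g) := by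
  have hST : Disjoint ({a, b} : Finset (Fin p)) {c, d} := by
    simp [hac.symm, had.symm, hbc.symm, hbd.symm]
  ext σ τ
  rw [mul_apply_eq_of_disjoint hST (fun _ _ => agreeOff_of_RPair_ne_zero)
      (fun _ _ => agreeOff_of_RhatPair_ne_zero),
    mul_apply_eq_of_disjoint hST.symm (fun _ _ => agreeOff_of_RhatPair_ne_zero)
      (fun _ _ => agreeOff_of_RPair_ne_zero)]
  set ρ := ({a, b} : Finset (Fin p)).piecewise τ σ
  set ρ' := ({c, d} : Finset (Fin p)).piecewise τ σ
  have hρ : ρ a = τ a ∧ ρ b = τ b ∧ ρ c = σ c ∧ ρ d = σ d := by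
    simp [ρ, hac.symm, had.symm, hbc.symm, hbd.symm]
  have hρ' : ρ' c = τ c ∧ ρ' d = τ d ∧ ρ' a = σ a ∧ ρ' b = σ b := by
    simp [ρ', hac, had, hbc, hbd]
  have h₁ : AgreeOff {a, b} σ ρ := agreeOff_piecewise _ σ τ
  have h₂ : AgreeOff {c, d} σ ρ' := agreeOff_piecewise _ σ τ
  have h₃ : AgreeOff {c, d} ρ τ ↔ AgreeOff {a, b} ρ' τ := by
    rw [agreeOff_piecewise_iff, agreeOff_piecewise_iff, Finset.union_comm]
  simp only [RPair_apply, RhatPair_apply, h₁, h₂, h₃, if_true, hρ, hρ']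
  have eL : R (f σ) (σ a, σ b) (τ a, τ b) * R (g ρ) (σ d, σ c) (τ c, τ d) =
      R (f σ) (σ a, σ b) (τ a, τ b) * R (g σ) (σ d, σ c) (τ c, τ d) := by
    by_cases h : R (f σ) (σ a, σ b) (τ a, τ b) = 0
    · rw [h, zero_mul, zero_mul]
    · rw [hg σ ρ h₁ (by rw [hρ.1, hρ.2.1]; exact ZeroWeight.weight_eq hzw h)]
  have eR : R (g σ) (σ d, σ c) (τ c, τ d) * R (f ρ') (σ a, σ b) (τ a, τ b) =
      R (g σ) (σ d, σ c) (τ c, τ d) * R (f σ) (σ a, σ b) (τ a, τ b) := by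
    by_cases h : R (g σ) (σ d, σ c) (τ c, τ d) = 0
    · rw [h, zero_mul, zero_mul]
    · rw [hf σ ρ' h₂ (by rw [hρ'.1, hρ'.2.1, add_comm]; exact ZeroWeight.weight_eq hzw h)]
  split_ifs
  · rw [eL, eR, mul_comm]
  · rw [mul_zero, mul_zero]

end PairOperators

lemma sum_comp_eq_of_agreeOff_pair {ι κ M : Type*} [DecidableEq ι] [AddCommMonoid M]
    {S : Finset ι} {A B : ι} (hA : A ∈ S) (hB : B ∈ S) (hAB : A ≠ B) (F : κ → M)
    {σ τ : ι → κ} (hστ : AgreeOff {A, B} σ τ) (hw : F (σ A) + F (σ B) = F (τ A) + F (τ B)) :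
    ∑ i ∈ S, F (σ i) = ∑ i ∈ S, F (τ i) := by
  have hsub : {A, B} ⊆ S := Finset.insert_subset hA (Finset.singleton_subset_iff.2 hB)
  rw [← Finset.sum_sdiff hsub, ← Finset.sum_sdiff hsub, Finset.sum_pair hAB,
    Finset.sum_pair hAB, hw]
  congr 1
  exact Finset.sum_congr rfl fun i hi => by rw [hστ i (Finset.mem_sdiff.1 hi).2]

section Hsum

variable {N : ℕ} {p s t : ℕ}

lemma hsum_eq_sum_filter (σ : Fin p → Fin N) :
    hsum N p s t σ = ∑ i ∈ Finset.univ.filter (fun i : Fin p => s ≤ i ∧ i < t), δ[σ i] :=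
  (Finset.sum_filter _ _).symm

lemma hsum_self (σ : Fin p → Fin N) : hsum N p s s σ = 0 :=
  Finset.sum_eq_zero fun _ _ => if_neg (by omega)

lemma hsum_succ (σ : Fin p → Fin N) (hs : s < p) (hst : s < t) :
    hsum N p s t σ = δ[σ ⟨s, hs⟩] + hsum N p (s + 1) t σ := by
  rw [hsum, ← Finset.add_sum_erase _ _ (Finset.mem_univ ⟨s, hs⟩), if_pos ⟨le_rfl, hst⟩, hsum,
    ← Finset.add_sum_erase _ _ (Finset.mem_univ ⟨s, hs⟩), if_neg (by simp), zero_add]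
  refine congrArg _ (Finset.sum_congr rfl fun i hi => ?_)
  have : (i : ℕ) ≠ s := fun h => (Finset.mem_erase.1 hi).1 (Fin.ext h)
  simp only [show s ≤ (i : ℕ) ↔ s + 1 ≤ i by omega]

lemma hsum_eq_of_agreeOff {S : Finset (Fin p)} {σ τ : Fin p → Fin N} (hστ : AgreeOff S σ τ)
    (hS : ∀ i ∈ S, (i : ℕ) < s ∨ t ≤ i) : hsum N p s t σ = hsum N p s t τ := by
  refine Finset.sum_congr rfl fun i _ => ?_
  split_ifs with hi
  · rw [hστ i fun h => by have := hS i h; omega]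
  · rfl

lemma pairInvariant_hsum_of_mem {c d : Fin p} (hcd : c ≠ d) (hc : s ≤ c ∧ (c : ℕ) < t)
    (hd : s ≤ d ∧ (d : ℕ) < t) : PairInvariant c d (hsum N p s t) := by
  intro σ τ hστ hw
  rw [hsum_eq_sum_filter, hsum_eq_sum_filter]
  exact (sum_comp_eq_of_agreeOff_pair (by simpa using hc) (by simpa using hd) hcd
    (fun v : Fin N => δ[v]) hστ hw).symm

lemma pairInvariant_hsum_of_not_mem {c d : Fin p} (hc : (c : ℕ) < s ∨ t ≤ c)
    (hd : (d : ℕ) < s ∨ t ≤ d) : PairInvariant c d (hsum N p s t) := fun _ _ hστ _ =>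
  (hsum_eq_of_agreeOff hστ (by simp [hc, hd])).symm

lemma pairInvariant_single_add_hsum {c d : Fin p} (hcd : c ≠ d) (hc : ¬(s ≤ c ∧ (c : ℕ) < t))
    (hd : s ≤ d ∧ (d : ℕ) < t) : PairInvariant c d fun σ => δ[σ c] + hsum N p s t σ := by
  intro σ τ hστ hw
  have hc' : c ∉ Finset.univ.filter (fun i : Fin p => s ≤ i ∧ i < t) := by simpa using hc
  dsimp only
  rw [hsum_eq_sum_filter, hsum_eq_sum_filter, ← Finset.sum_insert (f := fun i => δ[σ i]) hc',
    ← Finset.sum_insert (f := fun i => δ[τ i]) hc']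
  exact (sum_comp_eq_of_agreeOff_pair (Finset.mem_insert_self _ _)
    (Finset.mem_insert_of_mem (by simpa using hd)) hcd (fun v : Fin N => δ[v]) hστ hw).symm

end Hsum

lemma SemiconjBy.list_prod_map {M ι : Type*} [Monoid M] {a : M} {F F' : ι → M} :
    ∀ {l : List ι}, (∀ j ∈ l, SemiconjBy a (F j) (F' j)) →
      SemiconjBy a (l.map F).prod (l.map F').prod
  | [], _ => SemiconjBy.one_right a
  | j :: l, h => by
    simpa using (h j List.mem_cons_self).mul_right
      (SemiconjBy.list_prod_map fun i hi => h i (List.mem_cons_of_mem j hi))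

lemma SemiconjBy.list_prod_range'_map {M : Type*} [Monoid M] {f G : ℕ → M} :
    ∀ {n : ℕ}, (∀ i, 1 ≤ i → i ≤ n → SemiconjBy (f i) (G i) (G (i - 1))) →
      SemiconjBy ((List.range' 1 n).map f).prod (G n) (G 0)
  | 0, _ => SemiconjBy.one_left _
  | n + 1, h => by
    rw [List.range'_1_concat, List.map_append, List.prod_append, List.map_singleton,
      List.prod_singleton, add_comm 1 n]
    exact (SemiconjBy.list_prod_range'_map fun i hi hin => h i hi (by omega)).mul_left
      (h (n + 1) (by omega) le_rfl)

section Interchange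

variable {N}
variable {R : (Fin N → ℂ) → Matrix (Fin N × Fin N) (Fin N × Fin N) ℂ} {n m : ℕ}

/-- The factor `R_{i,n+j}` of `Q_i`. -/
def qFactor (R : (Fin N → ℂ) → Matrix (Fin N × Fin N) (Fin N × Fin N) ℂ) (n m i j : ℕ)
    (x : Fin N → ℂ) : Matrix (Fin (n + m) → Fin N) (Fin (n + m) → Fin N) ℂ :=
  RPair N R (n + m) (i - 1) (n + j - 1) fun σ =>
    x - (2 * γ) • hsum N (n + m) i n σ - (2 * γ) • hsum N (n + m) (n + j) (n + m) σ

/-- The factor `R̂_{n+k+1,n+k+2}` of `𝓘^{(n+1,n+m)}(x − 2γh^{(i+1,n)})`. -/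
def iFactor (R : (Fin N → ℂ) → Matrix (Fin N × Fin N) (Fin N × Fin N) ℂ) (n m i k : ℕ)
    (x : Fin N → ℂ) : Matrix (Fin (n + m) → Fin N) (Fin (n + m) → Fin N) ℂ :=
  RhatPair N R (n + m) (n + k) (n + k + 1) fun σ =>
    x - (2 * γ) • hsum N (n + m) i n σ - (2 * γ) • hsum N (n + m) (n + k + 2) (n + m) σ

variable {γ}

lemma commute_qFactor_iFactor_of_lt (hzw : ZeroWeight N R) {i j k : ℕ} (hi : 1 ≤ i)
    (hin : i ≤ n) (hj : 1 ≤ j) (hjk : j ≤ k) (hk : k + 2 ≤ m) (x : Fin N → ℂ) :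
    Commute (qFactor γ R n m i j x) (iFactor γ R n m i k x) := by
  refine commute_RPair_RhatPair (a := ⟨i - 1, by omega⟩) (b := ⟨n + j - 1, by omega⟩)
    (c := ⟨n + k, by omega⟩) (d := ⟨n + k + 1, by omega⟩) hzw (Fin.mk_eq_mk.not.2 (by omega))
    (Fin.mk_eq_mk.not.2 (by omega)) (Fin.mk_eq_mk.not.2 (by omega))
    (Fin.mk_eq_mk.not.2 (by omega)) ?_ ?_
  · exact ((PairInvariant.const x).sub ((pairInvariant_hsum_of_not_mem
      (by dsimp only; omega) (by dsimp only; omega)).const_smul _)).sub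
      ((pairInvariant_hsum_of_mem (Fin.mk_eq_mk.not.2 (by omega)) (by dsimp only; omega)
        (by dsimp only; omega)).const_smul _)
  · exact ((PairInvariant.const x).sub ((pairInvariant_hsum_of_not_mem
      (by dsimp only; omega) (by dsimp only; omega)).const_smul _)).sub
      ((pairInvariant_hsum_of_not_mem (by dsimp only; omega)
        (by dsimp only; omega)).const_smul _)

lemma commute_qFactor_iFactor_of_gt (hzw : ZeroWeight N R) {i j k : ℕ} (hi : 1 ≤ i)
    (hin : i ≤ n) (hkj : k + 3 ≤ j) (hjm : j ≤ m) (x : Fin N → ℂ) :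
    Commute (qFactor γ R n m i j x) (iFactor γ R n m (i - 1) k x) := by
  refine commute_RPair_RhatPair (a := ⟨i - 1, by omega⟩) (b := ⟨n + j - 1, by omega⟩)
    (c := ⟨n + k, by omega⟩) (d := ⟨n + k + 1, by omega⟩) hzw (Fin.mk_eq_mk.not.2 (by omega))
    (Fin.mk_eq_mk.not.2 (by omega)) (Fin.mk_eq_mk.not.2 (by omega))
    (Fin.mk_eq_mk.not.2 (by omega)) ?_ ?_
  · exact ((PairInvariant.const x).sub ((pairInvariant_hsum_of_not_mem
      (by dsimp only; omega) (by dsimp only; omega)).const_smul _)).sub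
      ((pairInvariant_hsum_of_not_mem (by dsimp only; omega)
        (by dsimp only; omega)).const_smul _)
  · have hshift : (fun σ => x - (2 * γ) • hsum N (n + m) (i - 1) n σ -
          (2 * γ) • hsum N (n + m) (n + k + 2) (n + m) σ) =
        fun σ => x - (2 * γ) • hsum N (n + m) i n σ -
          (2 * γ) • (δ[σ ⟨i - 1, by omega⟩] + hsum N (n + m) (n + k + 2) (n + m) σ) :=
      funext fun σ => by
        rw [hsum_succ σ (s := i - 1) (by omega) (by omega), Nat.sub_add_cancel hi]
        module
    rw [hshift]
    exact ((PairInvariant.const x).sub ((pairInvariant_hsum_of_not_mem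
      (by dsimp only; omega) (by dsimp only; omega)).const_smul _)).sub
      ((pairInvariant_single_add_hsum (Fin.mk_eq_mk.not.2 (by omega)) (by dsimp only; omega)
        (by dsimp only; omega)).const_smul _)

lemma semiconjBy_qFactor_pair_iFactor (hzw : ZeroWeight N R) (htr : TransInv N R)
    (hybe : DYBE N γ R) {i k : ℕ} (hi : 1 ≤ i) (hin : i ≤ n) (hk : k + 2 ≤ m)
    (x : Fin N → ℂ) :
    SemiconjBy (qFactor γ R n m i (k + 2) x * qFactor γ R n m i (k + 1) x)
      (iFactor γ R n m i k x) (iFactor γ R n m (i - 1) k x) := by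
  let a : Fin (n + m) := ⟨i - 1, by omega⟩
  let c : Fin (n + m) := ⟨n + k, by omega⟩
  let d : Fin (n + m) := ⟨n + k + 1, by omega⟩
  let g : (Fin (n + m) → Fin N) → Fin N → ℂ := fun σ =>
    x - (2 * γ) • hsum N (n + m) i n σ - (2 * γ) • hsum N (n + m) (n + k + 2) (n + m) σ
  have hg : ∀ σ τ, AgreeOff {a, c, d} σ τ → g τ = g σ := fun σ τ h => by
    simp only [g, hsum_eq_of_agreeOff h (s := i) (t := n) (by
        simp only [Finset.mem_insert, Finset.mem_singleton, forall_eq_or_imp, forall_eq, a, c, d]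
        omega),
      hsum_eq_of_agreeOff h (s := n + k + 2) (t := n + m) (by
        simp only [Finset.mem_insert, Finset.mem_singleton, forall_eq_or_imp, forall_eq, a, c, d]
        omega)]
  have h₁ : qFactor γ R n m i (k + 1) x =
      RPair N R (n + m) a c fun σ => g σ - (2 * γ) • δ[σ d] := by
    unfold qFactor
    congr 1
    funext σ
    rw [hsum_succ σ (s := n + (k + 1)) (by omega) (by omega)]
    module
  have h₂ : iFactor γ R n m (i - 1) k x =
      RhatPair N R (n + m) c d fun σ => g σ - (2 * γ) • δ[σ a] := by
    unfold iFactor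
    congr 1
    funext σ
    rw [hsum_succ σ (s := i - 1) (by omega) (by omega), Nat.sub_add_cancel hi]
    module
  rw [h₁, h₂]
  exact semiconjBy_RPair_RhatPair (Fin.mk_eq_mk.not.2 (by omega))
    (Fin.mk_eq_mk.not.2 (by omega)) (Fin.mk_eq_mk.not.2 (by omega)) hzw htr hybe g hg

lemma Qmat_eq_split {i k : ℕ} (hk : k + 2 ≤ m) (x : Fin N → ℂ) :
    Qmat N γ R n m i x =
      ((List.range' (k + 3) (m - (k + 2))).reverse.map (qFactor γ R n m i · x)).prod *
        (qFactor γ R n m i (k + 2) x * qFactor γ R n m i (k + 1) x) *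
        ((List.range' 1 k).reverse.map (qFactor γ R n m i · x)).prod := by
  have hsplit : List.range' 1 m =
      List.range' 1 k ++ [k + 1, k + 2] ++ List.range' (k + 3) (m - (k + 2)) := by
    obtain ⟨r, rfl⟩ : ∃ r, m = k + 2 + r := ⟨m - (k + 2), by omega⟩
    rw [← List.range'_append_1, ← List.range'_append_1, Nat.add_sub_cancel_left,
      show 1 + k = k + 1 by omega, show 1 + (k + 2) = k + 3 by omega]
    rfl
  rw [Qmat, hsplit]
  simp [qFactor, mul_assoc]

lemma semiconjBy_Qmat_iFactor (hzw : ZeroWeight N R) (htr : TransInv N R) (hybe : DYBE N γ R)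
    {i k : ℕ} (hi : 1 ≤ i) (hin : i ≤ n) (hk : k + 2 ≤ m) (x : Fin N → ℂ) :
    SemiconjBy (Qmat N γ R n m i x) (iFactor γ R n m i k x) (iFactor γ R n m (i - 1) k x) := by
  rw [Qmat_eq_split hk]
  refine (SemiconjBy.mul_left ?_
    (semiconjBy_qFactor_pair_iFactor hzw htr hybe hi hin hk x)).mul_left ?_
  · refine Commute.list_prod_left _ _ (List.forall_mem_map.2 fun j hj => ?_)
    rw [List.mem_reverse, List.mem_range'_1] at hj
    exact commute_qFactor_iFactor_of_gt hzw hi hin (by omega) (by omega) x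
  · refine Commute.list_prod_left _ _ (List.forall_mem_map.2 fun j hj => ?_)
    rw [List.mem_reverse, List.mem_range'_1] at hj
    exact commute_qFactor_iFactor_of_lt hzw hi hin (by omega) (by omega) hk x

lemma semiconjBy_prod_Qmat_iFactor (hzw : ZeroWeight N R) (htr : TransInv N R)
    (hybe : DYBE N γ R) {k : ℕ} (hk : k + 2 ≤ m) (x : Fin N → ℂ) :
    SemiconjBy ((List.range' 1 n).map fun i => Qmat N γ R n m i x).prod
      (iFactor γ R n m n k x) (iFactor γ R n m 0 k x) :=
  SemiconjBy.list_prod_range'_map (G := (iFactor γ R n m · k x)) fun _ hi hin =>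
    semiconjBy_Qmat_iFactor hzw htr hybe hi hin hk x

lemma iFactor_self (k : ℕ) (x : Fin N → ℂ) :
    iFactor γ R n m n k x = RhatPair N R (n + m) (n + k) (n + k + 1) fun σ =>
      x - (2 * γ) • hsum N (n + m) (n + k + 2) (n + m) σ := by
  simp only [iFactor, hsum_self, smul_zero, sub_zero]

end Interchange

theorem interchange_relation_star
    (R : (Fin N → ℂ) → Matrix (Fin N × Fin N) (Fin N × Fin N) ℂ)
    (hzw : ZeroWeight N R) (htr : TransInv N R) (hybe : DYBE N γ R)
    (n m : ℕ) (x : Fin N → ℂ) :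
    ((List.range' 1 n).map (fun i => Qmat N γ R n m i x)).prod *
      calI N γ R (n + m) (n + 1) (n + m) (fun _ => x) =
    calI N γ R (n + m) (n + 1) (n + m)
        (fun σ => x - (2 * γ) • hsum N (n + m) 0 n σ) *
      ((List.range' 1 n).map (fun i => Qmat N γ R n m i x)).prod := by
  refine SemiconjBy.list_prod_map fun j hj => ?_
  obtain ⟨k, rfl, hk⟩ : ∃ k, j = n + k + 1 ∧ k + 2 ≤ m := by
    rw [List.mem_range'_1] at hj
    exact ⟨j - n - 1, by omega, by omega⟩
  have h := semiconjBy_prod_Qmat_iFactor (n := n) hzw htr hybe hk x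
  rw [iFactor_self] at h
  -- equal to the goal up to the definitional `n + k + 1 - 1 = n + k`
  exact h
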